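/- Let (L_i)_{i≥1} be an infinite sequence of real-valued random variables that is exchangeable, i.e., for every N and every permutation σ of {1,…,N} the joint distribution of (L_{σ(1)},…,L_{σ(N)}) equals that of (L_1,…,L_N). Fix n ≥ 1, β ∈ (0,1) and α ∈ (0,1), and set k* = 1 + min{r ∈ {0,…,n} : BIN(r; n, β) ≥ 1−α}; assume k* ≤ n. Regard L_1,…,L_n as calibration losses with order statistics L^c_{(1)} ≤ … ≤ L^c_{(n)}, and for each m ≥ 1 let L_{(⌈mβ⌉),m} denote the ⌈mβ⌉-th smallest value among L_{n+1}, …, L_{n+m}. Then limsup_{m→∞} Pr[L_{(⌈mβ⌉),m} > L^c_{(k*)}] ≤ α. -/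

import Mathlib

open MeasureTheory Filter

/-- The `i`-th order statistic (0-indexed) of the finite tuple `f : Fin N → ℝ`. -/
noncomputable def orderStat {N : ℕ} (f : Fin N → ℝ) (i : Fin N) : ℝ := f (Tuple.sort f i)

/-- `BIN(r; n, β) = Σ_{j=0}^{r} C(n,j) β^j (1−β)^{n−j}`, the cumulative distribution function
of the binomial distribution with parameters `n` and `β`. -/
noncomputable def binCDF (n : ℕ) (β : ℝ) (r : ℕ) : ℝ :=
  ∑ j ∈ Finset.range (r + 1), (Nat.choose n j : ℝ) * β ^ j * (1 - β) ^ (n - j)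

open Finset Topology
open scoped ENNReal NNReal

lemma orderStat_def {N : ℕ} (f : Fin N → ℝ) (i : Fin N) :
    orderStat f i = (f ∘ Tuple.sort f) i := rfl

lemma card_filter_comp_perm {N : ℕ} (σ : Equiv.Perm (Fin N)) (p : Fin N → Prop) [DecidablePred p] :
    (Finset.univ.filter fun a => p (σ a)).card = (Finset.univ.filter p).card := by
  apply Finset.card_bij (fun a _ => σ a)
  · intro a ha; simp_all
  · intro a _ b _ h; exact σ.injective h
  · intro b hb; exact ⟨σ.symm b, by simp_all, by simp⟩

lemma le_card_le_orderStat {N : ℕ} (f : Fin N → ℝ) (i : Fin N) :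
    (i : ℕ) + 1 ≤ (Finset.univ.filter fun a => f a ≤ orderStat f i).card := by
  classical
  have hmono : Monotone (f ∘ Tuple.sort f) := Tuple.monotone_sort f
  have h := card_filter_comp_perm (Tuple.sort f) (fun a => f a ≤ orderStat f i)
  rw [← h]
  have hsub : Finset.Iic i ⊆ Finset.univ.filter fun a => f (Tuple.sort f a) ≤ orderStat f i := by
    intro q hq
    simp only [Finset.mem_Iic] at hq
    simp only [Finset.mem_filter, Finset.mem_univ, true_and]
    exact hmono hq
  calc (i:ℕ) + 1 = (Finset.Iic i).card := (Fin.card_Iic i).symm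
  _ ≤ _ := Finset.card_le_card hsub

lemma card_lt_orderStat_le {N : ℕ} (f : Fin N → ℝ) (i : Fin N) :
    (Finset.univ.filter fun a => f a < orderStat f i).card ≤ (i : ℕ) := by
  classical
  have hmono : Monotone (f ∘ Tuple.sort f) := Tuple.monotone_sort f
  have h := card_filter_comp_perm (Tuple.sort f) (fun a => f a < orderStat f i)
  rw [← h]
  have hsub : (Finset.univ.filter fun a => f (Tuple.sort f a) < orderStat f i) ⊆ Finset.Iio i := by
    intro q hq
    simp only [Finset.mem_filter, Finset.mem_univ, true_and] at hq
    simp only [Finset.mem_Iio]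
    by_contra hc
    exact absurd (hmono (le_of_not_gt hc)) (not_le.mpr hq)
  calc _ ≤ (Finset.Iio i).card := Finset.card_le_card hsub
  _ = (i:ℕ) := Fin.card_Iio i

lemma orderStat_le_iff {N : ℕ} (f : Fin N → ℝ) (i : Fin N) (a : ℝ) :
    orderStat f i ≤ a ↔
      ∃ S ∈ Finset.univ.powersetCard ((i : ℕ) + 1), ∀ j ∈ S, f j ≤ a := by
  classical
  constructor
  · intro h
    refine ⟨(Finset.Iic i).image (Tuple.sort f), ?_, ?_⟩
    · rw [Finset.mem_powersetCard]
      exact ⟨Finset.subset_univ _,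
        by rw [Finset.card_image_of_injective _ (Tuple.sort f).injective, Fin.card_Iic]⟩
    · intro p hp
      simp only [Finset.mem_image, Finset.mem_Iic] at hp
      obtain ⟨q, hq, rfl⟩ := hp
      exact le_trans (Tuple.monotone_sort f hq) h
  · rintro ⟨S, hS, hSle⟩
    rw [Finset.mem_powersetCard] at hS
    have : ∃ p ∈ S, i ≤ (Tuple.sort f).symm p := by
      by_contra hc
      push_neg at hc
      have hsub : S.image (Tuple.sort f).symm ⊆ Finset.Iio i := by
        intro q hq
        simp only [Finset.mem_image] at hq
        obtain ⟨p, hp, rfl⟩ := hq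
        exact Finset.mem_Iio.mpr (hc p hp)
      have := Finset.card_le_card hsub
      rw [Finset.card_image_of_injective _ (Tuple.sort f).symm.injective, hS.2,
        Fin.card_Iio] at this
      omega
    obtain ⟨p, hp, hip⟩ := this
    calc orderStat f i ≤ f (Tuple.sort f ((Tuple.sort f).symm p)) := Tuple.monotone_sort f hip
    _ = f p := by rw [Equiv.apply_symm_apply]
    _ ≤ a := hSle p hp

lemma measurable_orderStat {N : ℕ} (i : Fin N) :
    Measurable (fun f : Fin N → ℝ => orderStat f i) := by
  classical
  apply measurable_of_Iic
  intro a
  have : (fun f : Fin N → ℝ => orderStat f i) ⁻¹' (Set.Iic a)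
      = ⋃ S ∈ Finset.univ.powersetCard ((i : ℕ) + 1), ⋂ j ∈ S, {f : Fin N → ℝ | f j ≤ a} := by
    ext f
    simp only [Set.mem_preimage, Set.mem_Iic, orderStat_le_iff, Set.mem_iUnion, Set.mem_iInter,
      Set.mem_setOf_eq]
    tauto
  rw [this]
  refine MeasurableSet.biUnion (Finset.countable_toSet _) fun S _ =>
    MeasurableSet.biInter (Finset.countable_toSet _) fun j _ => ?_
  exact measurableSet_le (measurable_pi_apply j) measurable_const

lemma card_filter_coe_lt {N M : ℕ} (h : M ≤ N) :
    (Finset.univ.filter fun q : Fin N => (q : ℕ) < M).card = M := by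
  classical
  have : (Finset.univ.filter fun q : Fin N => (q : ℕ) < M)
      = (Finset.univ : Finset (Fin M)).image (Fin.castLE h) := by
    ext q
    simp only [Finset.mem_filter, Finset.mem_univ, true_and, Finset.mem_image]
    constructor
    · intro hq; exact ⟨⟨q, hq⟩, rfl⟩
    · rintro ⟨b, rfl⟩; exact b.2
  rw [this, Finset.card_image_of_injective _ (Fin.castLE_injective h), Finset.card_univ,
    Fintype.card_fin]

lemma exists_perm_image {n mm : ℕ} (S : Finset (Fin (n + mm))) (hS : S.card = n) :
    ∃ σ : Equiv.Perm (Fin (n + mm)),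
      Finset.univ.image (fun a : Fin n => σ (Fin.castAdd mm a)) = S := by
  classical
  set p : Fin (n + mm) → Prop := fun q => (q : ℕ) < n with hp
  have e0 : Fin n ≃ {q : Fin (n + mm) // p q} :=
    { toFun := fun a => ⟨Fin.castAdd mm a, a.2⟩
      invFun := fun q => ⟨(q : Fin (n+mm)) , q.2⟩
      left_inv := fun a => rfl
      right_inv := fun q => by ext; rfl }
  have hc1 : Fintype.card {q : Fin (n + mm) // p q} = n := by
    rw [← Fintype.card_congr e0, Fintype.card_fin]
  have hc2 : Fintype.card {q : Fin (n + mm) // q ∈ S} = n := by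
    rw [Fintype.card_coe, hS]
  have e1 : {q : Fin (n+mm) // p q} ≃ {q : Fin (n+mm) // q ∈ S} :=
    Fintype.equivOfCardEq (by rw [hc1, hc2])
  have e2 : {q : Fin (n+mm) // ¬ p q} ≃ {q : Fin (n+mm) // ¬ q ∈ S} :=
    Fintype.equivOfCardEq (by
      rw [Fintype.card_subtype_compl, Fintype.card_subtype_compl, hc1, hc2])
  refine ⟨Equiv.subtypeCongr e1 e2, ?_⟩
  have hmem : ∀ q : Fin (n+mm), p q → (Equiv.subtypeCongr e1 e2) q ∈ S := by
    intro q hq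
    have : (Equiv.subtypeCongr e1 e2) q = (e1 ⟨q, hq⟩ : Fin (n+mm)) := by
      simp [Equiv.subtypeCongr, hq]
    rw [this]
    exact (e1 ⟨q, hq⟩).2
  have hsub : Finset.univ.image (fun a : Fin n => (Equiv.subtypeCongr e1 e2) (Fin.castAdd mm a)) ⊆ S := by
    intro q hq
    simp only [Finset.mem_image] at hq
    obtain ⟨a, -, rfl⟩ := hq
    exact hmem _ a.2
  apply Finset.eq_of_subset_of_card_le hsub
  rw [Finset.card_image_of_injective, Finset.card_univ, Fintype.card_fin, hS]
  exact (Equiv.injective _).comp (Fin.castAdd_injective _ _)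
lemma det_core {n mm : ℕ} (x : Fin (n + mm) → ℝ) (σ : Equiv.Perm (Fin (n + mm))) (k j : ℕ)
    (hk : k < n) (hj : j < mm)
    (hlt : orderStat (fun a : Fin n => x (σ (Fin.castAdd mm a))) ⟨k, hk⟩
         < orderStat (fun b : Fin mm => x (σ (Fin.natAdd n b))) ⟨j, hj⟩) :
    k + 1 ≤ ((Finset.univ.image fun a : Fin n => (Tuple.sort x).symm (σ (Fin.castAdd mm a))) ∩
           (Finset.univ.filter fun q : Fin (n + mm) => (q : ℕ) < k + 1 + j)).card := by
  classical
  set ρ : Equiv.Perm (Fin (n+mm)) := (Tuple.sort x).symm with hρ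
  set y : Fin (n+mm) → ℝ := x ∘ (Tuple.sort x) with hy
  have hmono : Monotone y := Tuple.monotone_sort x
  have hxy : ∀ q, x q = y (ρ q) := by
    intro q; simp only [hy, hρ, Function.comp_apply, Equiv.apply_symm_apply]
  set c := orderStat (fun a : Fin n => x (σ (Fin.castAdd mm a))) ⟨k, hk⟩ with hc
  set t := orderStat (fun b : Fin mm => x (σ (Fin.natAdd n b))) ⟨j, hj⟩ with ht
  set CR := Finset.univ.image (fun a : Fin n => ρ (σ (Fin.castAdd mm a))) with hCR
  set TR := Finset.univ.image (fun b : Fin mm => ρ (σ (Fin.natAdd n b))) with hTR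
  set A := Finset.univ.filter (fun q => y q ≤ c) with hA
  set W := Finset.univ.filter (fun q : Fin (n+mm) => (q:ℕ) < k + 1 + j) with hW
  have hinjC : Function.Injective (fun a : Fin n => ρ (σ (Fin.castAdd mm a))) :=
    (ρ.injective.comp σ.injective).comp (Fin.castAdd_injective _ _)
  have hinjT : Function.Injective (fun b : Fin mm => ρ (σ (Fin.natAdd n b))) :=
    (ρ.injective.comp σ.injective).comp (fun b1 b2 hb => by
      have := congrArg Fin.val hb
      simp only [Fin.coe_natAdd] at this
      exact Fin.ext (by omega))
  -- Fact 1
  have fact1 : k + 1 ≤ (CR ∩ A).card := by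
    have h1 := le_card_le_orderStat (fun a : Fin n => x (σ (Fin.castAdd mm a))) ⟨k, hk⟩
    have himg : (Finset.univ.filter fun a : Fin n => x (σ (Fin.castAdd mm a)) ≤ c).image
        (fun a : Fin n => ρ (σ (Fin.castAdd mm a))) = CR ∩ A := by
      ext q
      simp only [Finset.mem_image, Finset.mem_filter, Finset.mem_univ, true_and, hCR, hA,
        Finset.mem_inter]
      constructor
      · rintro ⟨a, ha, rfl⟩
        exact ⟨⟨a, rfl⟩, by rw [← hxy]; exact ha⟩
      · rintro ⟨⟨a, rfl⟩, hq⟩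
        exact ⟨a, by rw [hxy]; exact hq, rfl⟩
    calc k + 1 ≤ _ := h1
    _ = (CR ∩ A).card := by
      rw [← himg, Finset.card_image_of_injective _ hinjC]
  -- Fact 2
  have fact2 : (TR ∩ A).card ≤ j := by
    have h2 := card_lt_orderStat_le (fun b : Fin mm => x (σ (Fin.natAdd n b))) ⟨j, hj⟩
    have hsub : TR ∩ A ⊆ (Finset.univ.filter fun b : Fin mm => x (σ (Fin.natAdd n b)) < t).image
        (fun b : Fin mm => ρ (σ (Fin.natAdd n b))) := by
      intro q hq
      simp only [hTR, hA, Finset.mem_inter, Finset.mem_image, Finset.mem_filter,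
        Finset.mem_univ, true_and] at hq ⊢
      obtain ⟨⟨b, rfl⟩, hyq⟩ := hq
      exact ⟨b, by rw [hxy]; exact lt_of_le_of_lt hyq hlt, rfl⟩
    calc (TR ∩ A).card ≤ _ := Finset.card_le_card hsub
    _ ≤ j := by rw [Finset.card_image_of_injective _ hinjT]; exact h2
  -- partition facts
  have hunion : CR ∪ TR = Finset.univ := by
    apply Finset.eq_univ_of_forall
    intro q
    set p := σ.symm (ρ.symm q) with hpdef
    have hq : ρ (σ p) = q := by simp [hpdef]
    rcases lt_or_ge (p : ℕ) n with h | h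
    · apply Finset.mem_union_left
      simp only [hCR, Finset.mem_image]
      have hcast : Fin.castAdd mm ⟨(p:ℕ), h⟩ = p := Fin.ext (by simp)
      exact ⟨⟨(p:ℕ), h⟩, Finset.mem_univ _, by rw [hcast, hq]⟩
    · apply Finset.mem_union_right
      simp only [hTR, Finset.mem_image]
      have hcast : Fin.natAdd n ⟨(p:ℕ) - n, by omega⟩ = p := Fin.ext (by simp; omega)
      exact ⟨⟨(p:ℕ) - n, by omega⟩, Finset.mem_univ _, by rw [hcast, hq]⟩
  have hdisj : Disjoint CR TR := by
    rw [Finset.disjoint_left]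
    intro q hqC hqT
    simp only [hCR, hTR, Finset.mem_image] at hqC hqT
    obtain ⟨a, -, ha⟩ := hqC
    obtain ⟨b, -, hb⟩ := hqT
    have : Fin.castAdd mm a = Fin.natAdd n b :=
      σ.injective (ρ.injective (ha.trans hb.symm))
    have := congrArg (fun z : Fin (n+mm) => (z : ℕ)) this
    simp only [Fin.coe_castAdd, Fin.coe_natAdd] at this
    omega
  by_cases hAW : A ⊆ W
  · exact le_trans fact1 (Finset.card_le_card (Finset.inter_subset_inter (Finset.Subset.refl _) hAW))
  · obtain ⟨q0, hq0A, hq0W⟩ := Finset.not_subset.mp hAW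
    simp only [hA, Finset.mem_filter, Finset.mem_univ, true_and] at hq0A
    simp only [hW, Finset.mem_filter, Finset.mem_univ, true_and, not_lt] at hq0W
    have hWA : W ⊆ A := by
      intro q hq
      simp only [hW, Finset.mem_filter, Finset.mem_univ, true_and] at hq
      simp only [hA, Finset.mem_filter, Finset.mem_univ, true_and]
      have hqq0 : q ≤ q0 := by
        rw [Fin.le_def]; omega
      exact le_trans (hmono hqq0) hq0A
    have hTW : (TR ∩ W).card ≤ j :=
      le_trans (Finset.card_le_card (Finset.inter_subset_inter (Finset.Subset.refl _) hWA)) fact2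
    have hWcard : W.card = k + 1 + j := card_filter_coe_lt (by omega)
    have hsplit : (CR ∩ W).card + (TR ∩ W).card = W.card := by
      rw [← Finset.card_union_of_disjoint
        (Finset.disjoint_of_subset_left Finset.inter_subset_left
          (Finset.disjoint_of_subset_right Finset.inter_subset_left hdisj))]
      congr 1
      rw [← Finset.union_inter_distrib_right, hunion, Finset.univ_inter]
    omega
lemma card_fiber_le {ι : Type*} [Fintype ι] [DecidableEq ι] (W : Finset ι) (n s : ℕ) :
    (((Finset.univ : Finset ι).powersetCard n).filter fun S => (S ∩ W).card = s).card ≤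
      W.card.choose s * (Finset.univ \ W).card.choose (n - s) := by
  classical
  have hrw : W.card.choose s * (Finset.univ \ W).card.choose (n - s)
      = ((W.powersetCard s) ×ˢ ((Finset.univ \ W).powersetCard (n - s))).card := by
    rw [Finset.card_product, Finset.card_powersetCard, Finset.card_powersetCard]
  rw [hrw]
  apply Finset.card_le_card_of_injOn (fun S : Finset ι => (S ∩ W, S \ W))
  · intro S hS
    simp only [Finset.mem_coe, Finset.mem_filter, Finset.mem_powersetCard] at hS
    obtain ⟨⟨-, hcard⟩, hints⟩ := hS
    have hsplit : (S ∩ W).card + (S \ W).card = S.card := Finset.card_inter_add_card_sdiff S W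
    simp only [Finset.mem_coe, Finset.mem_product, Finset.mem_powersetCard]
    refine ⟨⟨Finset.inter_subset_right, hints⟩, ?_, by omega⟩
    intro a ha
    simp only [Finset.mem_sdiff] at ha ⊢
    exact ⟨Finset.mem_univ _, ha.2⟩
  · intro S1 h1 S2 h2 heq
    simp only [Prod.mk.injEq] at heq
    have key : ∀ S : Finset ι, (S ∩ W) ∪ (S \ W) = S := by
      intro S; ext a; by_cases h : a ∈ W <;> simp [h]
    rw [← key S1, ← key S2, heq.1, heq.2]

lemma card_good_le {ι : Type*} [Fintype ι] [DecidableEq ι] (W : Finset ι) (n K : ℕ) :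
    (((Finset.univ : Finset ι).powersetCard n).filter fun S => K ≤ (S ∩ W).card).card ≤
      ∑ s ∈ Finset.Icc K n, W.card.choose s * (Finset.univ \ W).card.choose (n - s) := by
  classical
  rw [Finset.card_eq_sum_card_fiberwise (f := fun S => (S ∩ W).card) (t := Finset.Icc K n) ?_]
  · apply Finset.sum_le_sum
    intro s hs
    refine le_trans (Finset.card_le_card ?_) (card_fiber_le W n s)
    intro S hS
    simp only [Finset.mem_filter] at hS ⊢
    exact ⟨hS.1.1, hS.2⟩
  · intro S hS
    simp only [Finset.mem_coe, Finset.mem_filter, Finset.mem_powersetCard] at hS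
    rw [Finset.mem_coe, Finset.mem_Icc]
    refine ⟨hS.2, le_trans (Finset.card_le_card Finset.inter_subset_left) ?_⟩
    rw [hS.1.2]

lemma div_div_div_same {X Y c : ℝ} (hc : c ≠ 0) : (X / c) / (Y / c) = X / Y := by
  rcases eq_or_ne Y 0 with h | h
  · simp [h]
  · field_simp

lemma tendsto_linfrac {u : ℕ → ℝ} {γ : ℝ} (a b : ℝ)
    (hu : Tendsto (fun m : ℕ => u m / ((m : ℝ) + 1)) atTop (𝓝 γ)) :
    Tendsto (fun m : ℕ => (u m + a) / (((m : ℝ) + 1) + b)) atTop (𝓝 γ) := by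
  have h0 : Tendsto (fun m : ℕ => 1 / ((m : ℝ) + 1)) atTop (𝓝 0) :=
    tendsto_one_div_add_atTop_nhds_zero_nat
  have hnum : Tendsto (fun m : ℕ => (u m + a) / ((m : ℝ) + 1)) atTop (𝓝 (γ + a * 0)) := by
    have := hu.add (h0.const_mul a)
    apply this.congr
    intro m
    rw [add_div]
    ring
  have hden : Tendsto (fun m : ℕ => (((m : ℝ) + 1) + b) / ((m : ℝ) + 1)) atTop (𝓝 (1 + b * 0)) := by
    have h1 : Tendsto (fun m : ℕ => ((m : ℝ) + 1) / ((m : ℝ) + 1)) atTop (𝓝 1) := by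
      apply Tendsto.congr' _ tendsto_const_nhds
      filter_upwards [eventually_atTop.mpr ⟨1, fun m hm => hm⟩] with m _
      rw [div_self]
      positivity
    have := h1.add (h0.const_mul b)
    apply this.congr
    intro m
    rw [add_div]
    ring
  have := hnum.div hden (by norm_num)
  simp only [mul_zero, add_zero, div_one] at this
  apply this.congr
  intro m
  exact div_div_div_same (by positivity)

lemma tendsto_ceil_div (β : ℝ) (hβ0 : 0 < β) :
    Tendsto (fun m : ℕ => (⌈((m : ℝ) + 1) * β⌉₊ : ℝ) / ((m : ℝ) + 1)) atTop (𝓝 β) := by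
  have h0 : Tendsto (fun m : ℕ => 1 / ((m : ℝ) + 1)) atTop (𝓝 0) :=
    tendsto_one_div_add_atTop_nhds_zero_nat
  apply tendsto_of_tendsto_of_tendsto_of_le_of_le (g := fun _ : ℕ => β)
    (h := fun m : ℕ => β + 1 / ((m : ℝ) + 1)) tendsto_const_nhds
    (by simpa using tendsto_const_nhds.add h0)
  · intro m
    rw [le_div_iff₀ (by positivity)]
    calc β * ((m:ℝ) + 1) = ((m:ℝ)+1) * β := by ring
    _ ≤ _ := Nat.le_ceil _
  · intro m
    rw [div_le_iff₀ (by positivity)]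
    have := (Nat.ceil_lt_add_one (a := ((m:ℝ)+1)*β) (by positivity)).le
    calc (⌈((m : ℝ) + 1) * β⌉₊ : ℝ) ≤ ((m:ℝ)+1)*β + 1 := this
    _ = (β + 1/((m:ℝ)+1)) * ((m:ℝ)+1) := by field_simp
lemma tendsto_term (n rstar : ℕ) (β : ℝ) (hβ0 : 0 < β) (hβ1 : β < 1) (s : ℕ) (hs : s ≤ n) :
    Tendsto (fun m : ℕ =>
        (((rstar + ⌈((m : ℝ) + 1) * β⌉₊).choose s : ℝ) *
          (((n + (m + 1)) - (rstar + ⌈((m : ℝ) + 1) * β⌉₊)).choose (n - s) : ℝ)) /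
          ((n + (m + 1)).choose n : ℝ)) atTop
      (𝓝 ((n.choose s : ℝ) * (β ^ s * (1 - β) ^ (n - s)))) := by
  classical
  set cm : ℕ → ℕ := fun m => ⌈((m : ℝ) + 1) * β⌉₊ with hcm
  set M : ℕ → ℕ := fun m => rstar + cm m with hMdef
  set N : ℕ → ℕ := fun m => n + (m + 1) with hNdef
  have hNn : ∀ m, n ≤ N m := fun m => Nat.le_add_right _ _
  have hdN0 : ∀ m, ((N m).descFactorial n : ℝ) ≠ 0 := by
    intro m
    have : (N m).descFactorial n ≠ 0 := by
      intro h
      rw [Nat.descFactorial_eq_zero_iff_lt] at h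
      exact absurd (hNn m) (not_le.mpr h)
    exact_mod_cast this
  have hB0 : ∀ m, ((N m).choose n : ℝ) ≠ 0 := by
    intro m
    have := Nat.choose_pos (hNn m)
    positivity
  -- identity
  have hid : ∀ m, (((M m).choose s : ℝ) * ((N m - M m).choose (n - s) : ℝ)) / ((N m).choose n : ℝ)
      = (n.choose s : ℝ) * ((((M m).descFactorial s : ℝ) * ((N m - M m).descFactorial (n - s) : ℝ))
          / ((N m).descFactorial n : ℝ)) := by
    intro m
    have hnat : ((M m).choose s * (N m - M m).choose (n - s)) * (N m).descFactorial n
        = (n.choose s * ((M m).descFactorial s * (N m - M m).descFactorial (n - s)))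
            * (N m).choose n := by
      rw [Nat.descFactorial_eq_factorial_mul_choose (N m) n,
          Nat.descFactorial_eq_factorial_mul_choose (M m) s,
          Nat.descFactorial_eq_factorial_mul_choose _ (n - s),
          ← Nat.choose_mul_factorial_mul_factorial hs]
      ring
    rw [← mul_div_assoc, div_eq_div_iff (hB0 m) (hdN0 m)]
    exact_mod_cast congrArg (fun z : ℕ => (z : ℝ)) hnat
  -- eventual bounds
  have hgrow : Tendsto (fun m : ℕ => ((m : ℝ) + 1) * β) atTop atTop :=
    (tendsto_atTop_add_const_right atTop (1 : ℝ) tendsto_natCast_atTop_atTop).atTop_mul_const hβ0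
  have hgrow' : Tendsto (fun m : ℕ => ((m : ℝ) + 1) * (1 - β)) atTop atTop :=
    (tendsto_atTop_add_const_right atTop (1 : ℝ) tendsto_natCast_atTop_atTop).atTop_mul_const
      (by linarith)
  have hev1 : ∀ᶠ m in atTop, n ≤ cm m := by
    filter_upwards [hgrow.eventually_ge_atTop (n : ℝ)] with m hm
    have : (n : ℝ) ≤ (cm m : ℝ) := le_trans hm (Nat.le_ceil _)
    exact_mod_cast this
  have hev2 : ∀ᶠ m in atTop, cm m + (rstar + n) ≤ m + 1 := by
    filter_upwards [hgrow'.eventually_ge_atTop ((rstar : ℝ) + n + 1)] with m hm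
    have h1 : (cm m : ℝ) < ((m : ℝ) + 1) * β + 1 := Nat.ceil_lt_add_one (by positivity)
    have : (cm m : ℝ) + (rstar + n) ≤ (m : ℝ) + 1 := by nlinarith
    have h2 : ((cm m + (rstar + n) : ℕ) : ℝ) ≤ ((m + 1 : ℕ) : ℝ) := by push_cast; linarith
    exact_mod_cast h2
  -- limit of the descFactorial ratio
  have hu1 : Tendsto (fun m : ℕ => ((cm m : ℝ)) / ((m : ℝ) + 1)) atTop (𝓝 β) :=
    tendsto_ceil_div β hβ0
  have hu2 : Tendsto (fun m : ℕ => (((m : ℝ) + 1) - cm m) / ((m : ℝ) + 1)) atTop (𝓝 (1 - β)) := by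
    have hone : Tendsto (fun _ : ℕ => (1:ℝ)) atTop (𝓝 1) := tendsto_const_nhds
    have := hone.sub hu1
    apply this.congr
    intro m
    rw [sub_div, div_self (by positivity)]
  have hfact1 : ∀ t ∈ Finset.range s,
      Tendsto (fun m : ℕ => ((M m - t : ℕ) : ℝ) / ((N m - t : ℕ) : ℝ)) atTop (𝓝 β) := by
    intro t ht
    rw [Finset.mem_range] at ht
    apply Tendsto.congr' _ (tendsto_linfrac ((rstar : ℝ) - t) ((n : ℝ) - t) hu1)
    filter_upwards [hev1] with m hm
    have htM : t ≤ M m := by simp only [hMdef]; omega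
    have htN : t ≤ N m := le_trans (by omega) (hNn m)
    rw [Nat.cast_sub htM, Nat.cast_sub htN]
    simp only [hMdef, hNdef]
    push_cast
    ring_nf
  have hfact2 : ∀ t ∈ Finset.range (n - s),
      Tendsto (fun m : ℕ => ((N m - M m - t : ℕ) : ℝ) / ((N m - (s + t) : ℕ) : ℝ)) atTop
        (𝓝 (1 - β)) := by
    intro t ht
    rw [Finset.mem_range] at ht
    apply Tendsto.congr' _ (tendsto_linfrac ((n : ℝ) - rstar - t) ((n : ℝ) - s - t)
      (u := fun m => ((m : ℝ) + 1) - cm m) hu2)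
    filter_upwards [hev2] with m hm
    have hMN : M m + n ≤ N m := by simp only [hMdef, hNdef]; omega
    have htNM : t ≤ N m - M m := by omega
    have hstN : s + t ≤ N m := le_trans (by omega) (hNn m)
    rw [Nat.cast_sub htNM, Nat.cast_sub (by omega : M m ≤ N m), Nat.cast_sub hstN]
    simp only [hMdef, hNdef]
    push_cast
    ring_nf
  have hprod1 : Tendsto (fun m : ℕ => ∏ t ∈ Finset.range s, ((M m - t : ℕ) : ℝ) / ((N m - t : ℕ) : ℝ))
      atTop (𝓝 (β ^ s)) := by
    have := tendsto_finset_prod (Finset.range s) hfact1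
    simpa [Finset.prod_const, Finset.card_range] using this
  have hprod2 : Tendsto (fun m : ℕ => ∏ t ∈ Finset.range (n - s),
      ((N m - M m - t : ℕ) : ℝ) / ((N m - (s + t) : ℕ) : ℝ)) atTop (𝓝 ((1 - β) ^ (n - s))) := by
    have := tendsto_finset_prod (Finset.range (n - s)) hfact2
    simpa [Finset.prod_const, Finset.card_range] using this
  have hratio : Tendsto (fun m : ℕ => (((M m).descFactorial s : ℝ)
      * ((N m - M m).descFactorial (n - s) : ℝ)) / ((N m).descFactorial n : ℝ)) atTop
      (𝓝 (β ^ s * (1 - β) ^ (n - s))) := by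
    apply (hprod1.mul hprod2).congr
    intro m
    have h1 : ((M m).descFactorial s : ℝ) = ∏ t ∈ Finset.range s, ((M m - t : ℕ) : ℝ) := by
      rw [Nat.descFactorial_eq_prod_range]; push_cast; rfl
    have h2 : ((N m - M m).descFactorial (n - s) : ℝ)
        = ∏ t ∈ Finset.range (n - s), ((N m - M m - t : ℕ) : ℝ) := by
      rw [Nat.descFactorial_eq_prod_range]; push_cast; rfl
    have h3 : ((N m).descFactorial n : ℝ)
        = (∏ t ∈ Finset.range s, ((N m - t : ℕ) : ℝ))
            * ∏ t ∈ Finset.range (n - s), ((N m - (s + t) : ℕ) : ℝ) := by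
      rw [Nat.descFactorial_eq_prod_range]
      have hr : Finset.range n = Finset.range (s + (n - s)) := by
        congr 1; omega
      rw [hr, Finset.prod_range_add]
      push_cast
      rfl
    rw [Finset.prod_div_distrib, Finset.prod_div_distrib, div_mul_div_comm, ← h1, ← h2, ← h3]
  have := (hratio.const_mul ((n.choose s : ℝ)))
  apply this.congr
  intro m
  exact (hid m).symm
lemma per_m_bound {Ω : Type*} [MeasurableSpace Ω] (ℙ : Measure Ω) [IsProbabilityMeasure ℙ]
    (L : Ω → ℕ → ℝ) (hL : ∀ i, Measurable (fun ω => L ω i))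
    (hexch : ∀ (N : ℕ) (σ : Equiv.Perm (Fin N)),
      Measure.map (fun ω => fun i : Fin N => L ω (σ i)) ℙ
        = Measure.map (fun ω => fun i : Fin N => L ω (i : ℕ)) ℙ)
    (n m rstar jj : ℕ) (hkn : rstar + 1 ≤ n) (hjj1 : 1 ≤ jj) (hjjle : jj ≤ m + 1)
    (hk' : rstar < n) (hj' : jj - 1 < m + 1) :
    ℙ {ω | orderStat (fun a : Fin n => L ω (a : ℕ)) ⟨rstar, hk'⟩
        < orderStat (fun b : Fin (m + 1) => L ω (n + (b : ℕ))) ⟨jj - 1, hj'⟩}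
      ≤ ENNReal.ofReal (((∑ s ∈ Finset.Icc (rstar + 1) n,
          (rstar + jj).choose s * ((n + (m + 1)) - (rstar + jj)).choose (n - s) : ℕ) : ℝ)
          / (((n + (m + 1)).choose n : ℕ) : ℝ)) := by
  classical
  set Mm := rstar + jj with hMm
  have hMle : Mm ≤ n + (m + 1) := by omega
  set T : Set (Fin (n + (m + 1)) → ℝ) :=
    {x | orderStat (fun a : Fin n => x (Fin.castAdd (m + 1) a)) ⟨rstar, hk'⟩
        < orderStat (fun b : Fin (m + 1) => x (Fin.natAdd n b)) ⟨jj - 1, hj'⟩} with hTdef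
  have hg1 : Measurable (fun (x : Fin (n + (m + 1)) → ℝ) (a : Fin n) => x (Fin.castAdd (m + 1) a)) :=
    measurable_pi_lambda _ fun a => measurable_pi_apply _
  have hg2 : Measurable (fun (x : Fin (n + (m + 1)) → ℝ) (b : Fin (m + 1)) => x (Fin.natAdd n b)) :=
    measurable_pi_lambda _ fun b => measurable_pi_apply _
  have hm1 : Measurable (fun x : Fin (n + (m + 1)) → ℝ =>
      orderStat (fun a : Fin n => x (Fin.castAdd (m + 1) a)) ⟨rstar, hk'⟩) := by
    exact (measurable_orderStat ⟨rstar, hk'⟩).comp hg1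
  have hm2 : Measurable (fun x : Fin (n + (m + 1)) → ℝ =>
      orderStat (fun b : Fin (m + 1) => x (Fin.natAdd n b)) ⟨jj - 1, hj'⟩) := by
    exact (measurable_orderStat ⟨jj - 1, hj'⟩).comp hg2
  have hTmeas : MeasurableSet T := measurableSet_lt hm1 hm2
  have hbase : Measurable (fun ω => fun i : Fin (n + (m + 1)) => L ω (i : ℕ)) :=
    measurable_pi_lambda _ fun i => hL _
  have hEeq : {ω | orderStat (fun a : Fin n => L ω (a : ℕ)) ⟨rstar, hk'⟩
        < orderStat (fun b : Fin (m + 1) => L ω (n + (b : ℕ))) ⟨jj - 1, hj'⟩}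
      = (fun ω => fun i : Fin (n + (m + 1)) => L ω (i : ℕ)) ⁻¹' T := rfl
  rw [hEeq]
  set σS : Finset (Fin (n + (m + 1))) → Equiv.Perm (Fin (n + (m + 1))) := fun S =>
    if h : S.card = n then (exists_perm_image S h).choose else 1 with hσS
  have hσSprop : ∀ S : Finset (Fin (n + (m + 1))), S.card = n →
      Finset.univ.image (fun a : Fin n => σS S (Fin.castAdd (m + 1) a)) = S := by
    intro S h
    simp only [hσS, dif_pos h]
    exact (exists_perm_image S h).choose_spec
  set A : Finset (Fin (n + (m + 1))) → Set Ω := fun S =>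
    (fun ω => fun i : Fin (n + (m + 1)) => L ω ((σS S i : ℕ))) ⁻¹' T with hA
  have hAmeas : ∀ S, MeasurableSet (A S) := fun S =>
    (measurable_pi_lambda _ fun i => hL _) hTmeas
  have hAP : ∀ S, ℙ (A S) = ℙ ((fun ω => fun i : Fin (n + (m + 1)) => L ω (i : ℕ)) ⁻¹' T) := by
    intro S
    rw [hA]
    rw [← Measure.map_apply (measurable_pi_lambda _ fun i => hL _) hTmeas,
      ← Measure.map_apply hbase hTmeas, hexch (n + (m + 1)) (σS S)]
  set 𝒮 := (Finset.univ : Finset (Fin (n + (m + 1)))).powersetCard n with h𝒮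
  set W := Finset.univ.filter (fun q : Fin (n + (m + 1)) => (q : ℕ) < Mm) with hW
  set Sgood := 𝒮.filter (fun SS => rstar + 1 ≤ (SS ∩ W).card) with hSgood
  have key : ∀ ω, (∑ S ∈ 𝒮, (A S).indicator (fun _ => (1 : ℝ≥0∞)) ω) ≤ (Sgood.card : ℝ≥0∞) := by
    intro ω
    have h1 : (∑ S ∈ 𝒮, (A S).indicator (fun _ => (1 : ℝ≥0∞)) ω)
        = ((𝒮.filter fun S => ω ∈ A S).card : ℝ≥0∞) := by
      simp only [Set.indicator_apply]
      rw [Finset.sum_boole]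
    rw [h1]
    have h2 : (𝒮.filter fun S => ω ∈ A S).card ≤ Sgood.card := by
      set x : Fin (n + (m + 1)) → ℝ := fun i => L ω (i : ℕ) with hx
      apply Finset.card_le_card_of_injOn (fun S => S.image (Tuple.sort x).symm)
      · intro S hS
        simp only [Finset.mem_coe, Finset.mem_filter] at hS
        obtain ⟨hS𝒮, hωA⟩ := hS
        have hScard : S.card = n := (Finset.mem_powersetCard.mp hS𝒮).2
        have hlt : orderStat (fun a : Fin n => x (σS S (Fin.castAdd (m + 1) a))) ⟨rstar, hk'⟩
            < orderStat (fun b : Fin (m + 1) => x (σS S (Fin.natAdd n b))) ⟨jj - 1, hj'⟩ := hωA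
        have hdet := det_core x (σS S) rstar (jj - 1) hk' hj' hlt
        have harith : rstar + 1 + (jj - 1) = Mm := by omega
        rw [harith] at hdet
        have himg : Finset.univ.image
            (fun a : Fin n => (Tuple.sort x).symm (σS S (Fin.castAdd (m + 1) a)))
            = S.image (Tuple.sort x).symm := by
          conv_rhs => rw [← hσSprop S hScard]
          rw [Finset.image_image]
          rfl
        rw [himg] at hdet
        simp only [Finset.mem_coe, hSgood, Finset.mem_filter]
        constructor
        · simp only [h𝒮, Finset.mem_powersetCard]
          exact ⟨Finset.subset_univ _,
            by rw [Finset.card_image_of_injective _ (Tuple.sort x).symm.injective, hScard]⟩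
        · exact hdet
      · intro S1 h1' S2 h2' heq
        exact Finset.image_injective (Tuple.sort x).symm.injective heq
    exact_mod_cast Nat.cast_le.mpr h2
  have hsum : (𝒮.card : ℝ≥0∞) * ℙ ((fun ω => fun i : Fin (n + (m + 1)) => L ω (i : ℕ)) ⁻¹' T)
      ≤ (Sgood.card : ℝ≥0∞) := by
    calc (𝒮.card : ℝ≥0∞) * ℙ ((fun ω => fun i : Fin (n + (m + 1)) => L ω (i : ℕ)) ⁻¹' T)
        = ∑ S ∈ 𝒮, ℙ (A S) := by
          rw [Finset.sum_congr rfl (fun S _ => hAP S), Finset.sum_const, nsmul_eq_mul]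
    _ = ∑ S ∈ 𝒮, ∫⁻ ω, (A S).indicator (fun _ => (1 : ℝ≥0∞)) ω ∂ℙ :=
          Finset.sum_congr rfl fun S _ => (lintegral_indicator_one (hAmeas S)).symm
    _ = ∫⁻ ω, ∑ S ∈ 𝒮, (A S).indicator (fun _ => (1 : ℝ≥0∞)) ω ∂ℙ :=
          (lintegral_finset_sum' 𝒮 fun S _ => (measurable_const.indicator (hAmeas S)).aemeasurable).symm
    _ ≤ ∫⁻ _, (Sgood.card : ℝ≥0∞) ∂ℙ := lintegral_mono key
    _ = (Sgood.card : ℝ≥0∞) := by rw [lintegral_const, measure_univ, mul_one]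
  have hScard𝒮 : 𝒮.card = (n + (m + 1)).choose n := by
    rw [h𝒮, Finset.card_powersetCard, Finset.card_univ, Fintype.card_fin]
  have hWcard : W.card = Mm := card_filter_coe_lt hMle
  have hWk : (Finset.univ \ W).card = (n + (m + 1)) - Mm := by
    rw [Finset.card_sdiff_of_subset (Finset.subset_univ _), Finset.card_univ, Fintype.card_fin, hWcard]
  have hSgoodle : Sgood.card ≤ ∑ s ∈ Finset.Icc (rstar + 1) n,
      Mm.choose s * ((n + (m + 1)) - Mm).choose (n - s) := by
    have hb := card_good_le W n (rstar + 1)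
    rw [hWcard, hWk] at hb
    exact hb
  have hchoosepos : 0 < (n + (m + 1)).choose n := Nat.choose_pos (by omega)
  have final : ℙ ((fun ω => fun i : Fin (n + (m + 1)) => L ω (i : ℕ)) ⁻¹' T)
      ≤ ((∑ s ∈ Finset.Icc (rstar + 1) n,
          Mm.choose s * ((n + (m + 1)) - Mm).choose (n - s) : ℕ) : ℝ≥0∞)
        / (((n + (m + 1)).choose n : ℕ) : ℝ≥0∞) := by
    rw [ENNReal.le_div_iff_mul_le
      (Or.inl (by exact_mod_cast hchoosepos.ne'))
      (Or.inl (ENNReal.natCast_ne_top _))]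
    calc ℙ ((fun ω => fun i : Fin (n + (m + 1)) => L ω (i : ℕ)) ⁻¹' T)
          * (((n + (m + 1)).choose n : ℕ) : ℝ≥0∞)
        = (𝒮.card : ℝ≥0∞) * ℙ ((fun ω => fun i : Fin (n + (m + 1)) => L ω (i : ℕ)) ⁻¹' T) := by
          rw [hScard𝒮, mul_comm]
    _ ≤ (Sgood.card : ℝ≥0∞) := hsum
    _ ≤ _ := by exact_mod_cast hSgoodle
  calc ℙ ((fun ω => fun i : Fin (n + (m + 1)) => L ω (i : ℕ)) ⁻¹' T) ≤ _ := final
  _ = ENNReal.ofReal _ := by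
    rw [ENNReal.ofReal_div_of_pos (by exact_mod_cast hchoosepos), ENNReal.ofReal_natCast,
      ENNReal.ofReal_natCast]
lemma sum_tail_le (n rstar : ℕ) (β α : ℝ) (hβ0 : 0 < β) (hβ1 : β < 1)
    (hrn : rstar ≤ n) (hrge : 1 - α ≤ binCDF n β rstar) :
    (∑ s ∈ Finset.Icc (rstar + 1) n, (n.choose s : ℝ) * (β ^ s * (1 - β) ^ (n - s))) ≤ α := by
  have hone : (∑ j ∈ Finset.range (n + 1), (Nat.choose n j : ℝ) * β ^ j * (1 - β) ^ (n - j))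
      = 1 := by
    have h := add_pow β (1 - β) n
    simp only [add_sub_cancel, one_pow] at h
    calc (∑ j ∈ Finset.range (n + 1), (Nat.choose n j : ℝ) * β ^ j * (1 - β) ^ (n - j))
        = ∑ j ∈ Finset.range (n + 1), β ^ j * (1 - β) ^ (n - j) * (Nat.choose n j : ℝ) :=
          Finset.sum_congr rfl fun j _ => by ring
    _ = 1 := h.symm
  have hsplit : (∑ j ∈ Finset.range (rstar + 1), (Nat.choose n j : ℝ) * β ^ j * (1 - β) ^ (n - j))
      + (∑ j ∈ Finset.Ico (rstar + 1) (n + 1), (Nat.choose n j : ℝ) * β ^ j * (1 - β) ^ (n - j))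
      = ∑ j ∈ Finset.range (n + 1), (Nat.choose n j : ℝ) * β ^ j * (1 - β) ^ (n - j) := by
    rw [Finset.range_eq_Ico, Finset.range_eq_Ico]
    exact Finset.sum_Ico_consecutive _ (by omega) (by omega)
  have hIcc : Finset.Ico (rstar + 1) (n + 1) = Finset.Icc (rstar + 1) n := Finset.Ico_add_one_right_eq_Icc _ _
  have heq : (∑ s ∈ Finset.Icc (rstar + 1) n, (n.choose s : ℝ) * (β ^ s * (1 - β) ^ (n - s)))
      = ∑ j ∈ Finset.Ico (rstar + 1) (n + 1), (Nat.choose n j : ℝ) * β ^ j * (1 - β) ^ (n - j) := by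
    rw [hIcc]
    apply Finset.sum_congr rfl
    intro j _
    ring
  rw [heq]
  have : binCDF n β rstar
      + (∑ j ∈ Finset.Ico (rstar + 1) (n + 1), (Nat.choose n j : ℝ) * β ^ j * (1 - β) ^ (n - j))
      = 1 := by rw [binCDF, hsplit, hone]
  linarith


/-- Let `(L_i)_{i≥1}` be an infinite exchangeable sequence of real random variables.  Fix
`n ≥ 1`, `β ∈ (0,1)`, `α ∈ (0,1)` and let `k* = 1 + min{r ∈ {0,…,n} : BIN(r; n, β) ≥ 1−α}`
(encoded as `k* = rstar + 1` where `rstar` is the minimizer); assume `k* ≤ n`.  Regarding the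
first `n` variables as calibration losses with order statistics `L^c_(1) ≤ … ≤ L^c_(n)`, and
letting `L_(⌈mβ⌉),m` denote the `⌈mβ⌉`-th smallest value among the next `m` variables
`L_{n+1}, …, L_{n+m}` (here parametrized by `m+1` so that `m` ranges over positive integers),
we have `limsup_{m→∞} Pr[L_(⌈mβ⌉),m > L^c_(k*)] ≤ α`. -/
theorem lal_limsup_le (n : ℕ) (hn : 1 ≤ n)
    {Ω : Type*} [MeasurableSpace Ω] (ℙ : Measure Ω) [IsProbabilityMeasure ℙ]
    (L : Ω → ℕ → ℝ) (hL : ∀ i, Measurable (fun ω => L ω i))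
    (hexch : ∀ (N : ℕ) (σ : Equiv.Perm (Fin N)),
      Measure.map (fun ω => fun i : Fin N => L ω (σ i)) ℙ
        = Measure.map (fun ω => fun i : Fin N => L ω (i : ℕ)) ℙ)
    (β α : ℝ) (hβ0 : 0 < β) (hβ1 : β < 1) (hα0 : 0 < α) (hα1 : α < 1)
    (rstar : ℕ) (hrn : rstar ≤ n) (hrge : 1 - α ≤ binCDF n β rstar)
    (hrmin : ∀ r ≤ n, 1 - α ≤ binCDF n β r → rstar ≤ r)
    (hkn : rstar + 1 ≤ n) :
    Filter.limsup
      (fun m : ℕ =>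
        ℙ {ω |
            orderStat (fun a : Fin n => L ω (a : ℕ)) ⟨rstar + 1 - 1, by omega⟩
              < orderStat (fun b : Fin (m + 1) => L ω (n + (b : ℕ)))
                  ⟨⌈((m : ℝ) + 1) * β⌉₊ - 1, by
                    have h1 : ((m : ℝ) + 1) * β ≤ (m : ℝ) + 1 :=
                      mul_le_of_le_one_right (by positivity) (le_of_lt hβ1)
                    have h2 : ⌈((m : ℝ) + 1) * β⌉₊ ≤ m + 1 :=
                      Nat.ceil_le.mpr (by push_cast; linarith)
                    omega⟩})
      atTop ≤ ENNReal.ofReal α := by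

  classical
  set hreal : ℕ → ℝ := fun m => ((∑ s ∈ Finset.Icc (rstar + 1) n,
      (rstar + ⌈((m : ℝ) + 1) * β⌉₊).choose s *
        ((n + (m + 1)) - (rstar + ⌈((m : ℝ) + 1) * β⌉₊)).choose (n - s) : ℕ) : ℝ)
      / (((n + (m + 1)).choose n : ℕ) : ℝ) with hhreal
  have hjj1 : ∀ m : ℕ, 1 ≤ ⌈((m : ℝ) + 1) * β⌉₊ := fun m =>
    Nat.ceil_pos.mpr (by positivity)
  have hjjle : ∀ m : ℕ, ⌈((m : ℝ) + 1) * β⌉₊ ≤ m + 1 := fun m =>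
    Nat.ceil_le.mpr (by push_cast; nlinarith [Nat.cast_nonneg (α := ℝ) m])
  have hstep1 : ∀ m : ℕ,
      ℙ {ω | orderStat (fun a : Fin n => L ω (a : ℕ)) ⟨rstar + 1 - 1, by omega⟩
          < orderStat (fun b : Fin (m + 1) => L ω (n + (b : ℕ)))
              ⟨⌈((m : ℝ) + 1) * β⌉₊ - 1, by have := hjjle m; omega⟩}
        ≤ ENNReal.ofReal (hreal m) := by
    intro m
    have hbd := per_m_bound ℙ L hL hexch n m rstar (⌈((m : ℝ) + 1) * β⌉₊) hkn (hjj1 m)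
      (hjjle m) (by omega) (by have := hjjle m; omega)
    simp only [Nat.add_sub_cancel]
    exact hbd
  refine le_trans (Filter.limsup_le_limsup (Eventually.of_forall hstep1)) ?_
  · have hstep2 : Tendsto hreal atTop
        (𝓝 (∑ s ∈ Finset.Icc (rstar + 1) n, (n.choose s : ℝ) * (β ^ s * (1 - β) ^ (n - s)))) := by
      have hterm := tendsto_finset_sum (Finset.Icc (rstar + 1) n)
        (fun s hs => tendsto_term n rstar β hβ0 hβ1 s (Finset.mem_Icc.mp hs).2)
      apply hterm.congr
      intro m
      rw [← Finset.sum_div]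
      congr 1
      push_cast
      rfl
    have hlim : Tendsto (fun m => ENNReal.ofReal (hreal m)) atTop
        (𝓝 (ENNReal.ofReal (∑ s ∈ Finset.Icc (rstar + 1) n,
          (n.choose s : ℝ) * (β ^ s * (1 - β) ^ (n - s))))) :=
      (ENNReal.continuous_ofReal.tendsto _).comp hstep2
    rw [hlim.limsup_eq]
    exact ENNReal.ofReal_le_ofReal (sum_tail_le n rstar β α hβ0 hβ1 hrn hrge)
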